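/- Let a > 0, σ > 0, σ̃ > 0, let μ be the Gaussian mixture distribution on ℝ with density μ(z) = (1/2)·N(z; −a, σ²) + (1/2)·N(z; a, σ²), and let ν = N(0, σ̃²). Let F_μ and F_ν denote the cumulative distribution functions of μ and ν, and let T = F_ν⁻¹ ∘ F_μ. Then T is differentiable at 0 and T′(0) = (σ̃/σ)·exp(−a²/(2σ²)). -/

import Mathlib

open MeasureTheory Set Filter Function

noncomputable section

/-- Density of the one-dimensional Gaussian with mean `m` and variance `v`, evaluated at `x`. -/
def gpdf (m v x : ℝ) : ℝ := (Real.sqrt (2 * Real.pi * v))⁻¹ * Real.exp (-(x - m) ^ 2 / (2 * v))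

/-- Cumulative distribution function associated with a density `p`. -/
def cdfOf (p : ℝ → ℝ) (z : ℝ) : ℝ := ∫ t in Set.Iic z, p t


lemma gpdf_eq_gaussian (m : ℝ) {v : ℝ} (hv : 0 ≤ v) :
    gpdf m v = ProbabilityTheory.gaussianPDFReal m ⟨v, hv⟩ := rfl

lemma continuous_gpdf (m v : ℝ) : Continuous (gpdf m v) := by
  unfold gpdf; fun_prop

lemma gpdf_pos (m : ℝ) {v : ℝ} (hv : 0 < v) (x : ℝ) : 0 < gpdf m v x := by
  unfold gpdf
  have : 0 < Real.sqrt (2 * Real.pi * v) := Real.sqrt_pos.2 (by positivity)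
  positivity

lemma integrable_gpdf (m : ℝ) {v : ℝ} (hv : 0 ≤ v) : Integrable (gpdf m v) := by
  rw [gpdf_eq_gaussian m hv]
  exact ProbabilityTheory.integrable_gaussianPDFReal m ⟨v, hv⟩

lemma integral_gpdf (m : ℝ) {v : ℝ} (hv : 0 < v) : ∫ x, gpdf m v x = 1 := by
  rw [gpdf_eq_gaussian m hv.le]
  exact ProbabilityTheory.integral_gaussianPDFReal_eq_one m (fun h => hv.ne' (congrArg NNReal.toReal h))

lemma gpdf_neg (m v x : ℝ) : gpdf (-m) v (-x) = gpdf m v x := by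
  unfold gpdf; ring_nf


lemma cdfOf_eq {p : ℝ → ℝ} (hpi : Integrable p) (z : ℝ) :
    cdfOf p z = cdfOf p 0 + ∫ t in (0:ℝ)..z, p t := by
  have := intervalIntegral.integral_Iic_sub_Iic (hpi.integrableOn (s := Iic 0)) (hpi.integrableOn (s := Iic z))
  unfold cdfOf; linarith

lemma hasDerivAt_cdfOf {p : ℝ → ℝ} (hpi : Integrable p) (hpc : Continuous p) (x : ℝ) :
    HasDerivAt (cdfOf p) (p x) x := by
  have h := ((hpc.integral_hasStrictDerivAt 0 x).hasDerivAt).const_add (cdfOf p 0)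
  have e : (fun z => cdfOf p 0 + ∫ t in (0:ℝ)..z, p t) = cdfOf p := by
    funext z; exact (cdfOf_eq hpi z).symm
  rwa [e] at h

lemma strictMono_cdfOf {p : ℝ → ℝ} (hpi : Integrable p) (hpc : Continuous p)
    (hpos : ∀ x, 0 < p x) : StrictMono (cdfOf p) := by
  intro x y hxy
  have h1 : 0 < ∫ t in x..y, p t :=
    intervalIntegral.intervalIntegral_pos_of_pos (hpc.intervalIntegrable x y) hpos hxy
  have h2 := intervalIntegral.integral_Iic_sub_Iic (hpi.integrableOn (s := Iic x)) (hpi.integrableOn (s := Iic y))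
  unfold cdfOf; linarith

lemma cdfOf_zero_of_even {p : ℝ → ℝ} (hpi : Integrable p) (heven : ∀ x, p (-x) = p x)
    (htot : ∫ x, p x = 1) : cdfOf p 0 = 1 / 2 := by
  have h1 : (∫ t in Iic (0:ℝ), p t) = ∫ t in Ioi (0:ℝ), p t := by
    have h := integral_comp_neg_Iic 0 p
    simp only [heven, neg_zero] at h
    exact h
  have h2 := intervalIntegral.integral_Iic_add_Ioi (hpi.integrableOn (s := Iic (0:ℝ)))
    (hpi.integrableOn (s := Ioi (0:ℝ)))
  unfold cdfOf; rw [htot] at h2; linarith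

/-- inverse of continuous strictly monotone function: continuity and local right-inverse. -/
lemma invFun_props {G : ℝ → ℝ} (hGc : Continuous G) (hGm : StrictMono G) (x₀ : ℝ) :
    ContinuousAt (Function.invFun G) (G x₀) ∧
      ∀ᶠ y in nhds (G x₀), G (Function.invFun G y) = y := by
  have hinj := hGm.injective
  have hrange : ∀ u w : ℝ, ∀ y ∈ Ioo (G u) (G w), G (invFun G y) = y ∧ invFun G y ∈ Ioo u w := by
    intro u w y hy
    have hle : u ≤ w := by
      by_contra h
      have := hGm (lt_of_not_ge h)
      exact absurd (hy.1.trans hy.2) (by linarith)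
    obtain ⟨x, hx, hxy⟩ := intermediate_value_Ioo hle hGc.continuousOn hy
    have : invFun G y = x := by rw [← hxy, Function.leftInverse_invFun hinj]
    rw [this, ← hxy]
    exact ⟨rfl, hx⟩
  constructor
  · have hx0 : invFun G (G x₀) = x₀ := Function.leftInverse_invFun hinj x₀
    rw [ContinuousAt, hx0, tendsto_order]
    constructor
    · intro b hb
      have hmem : Ioo (G b) (G (x₀ + 1)) ∈ nhds (G x₀) :=
        Ioo_mem_nhds (hGm hb) (hGm (by linarith))
      filter_upwards [hmem] with y hy
      exact ((hrange b (x₀ + 1) y hy).2).1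
    · intro b hb
      have hmem : Ioo (G (x₀ - 1)) (G b) ∈ nhds (G x₀) :=
        Ioo_mem_nhds (hGm (by linarith)) (hGm hb)
      filter_upwards [hmem] with y hy
      exact ((hrange (x₀ - 1) b y hy).2).2
  · have hmem : Ioo (G (x₀ - 1)) (G (x₀ + 1)) ∈ nhds (G x₀) :=
      Ioo_mem_nhds (hGm (by linarith)) (hGm (by linarith))
    filter_upwards [hmem] with y hy
    exact (hrange _ _ y hy).1


/-- For the Gaussian mixture `μ(z) = N(z; -a, σ²)/2 + N(z; a, σ²)/2` and
`ν = N(0, σ̃²)`, the transport map `T = F_ν⁻¹ ∘ F_μ` is differentiable at `0` and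
`T'(0) = (σ̃ / σ) · exp(-a² / (2σ²))`. -/
theorem stmt1 (a σ σt : ℝ) (ha : 0 < a) (hσ : 0 < σ) (hσt : 0 < σt)
    (p : ℝ → ℝ) (hp : p = fun z => gpdf (-a) (σ ^ 2) z / 2 + gpdf a (σ ^ 2) z / 2)
    (T : ℝ → ℝ) (hT : T = Function.invFun (cdfOf (gpdf 0 (σt ^ 2))) ∘ cdfOf p) :
    HasDerivAt T (σt / σ * Real.exp (-(a ^ 2) / (2 * σ ^ 2))) 0 := by
  have hv : (0:ℝ) < σ ^ 2 := by positivity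
  have hvt : (0:ℝ) < σt ^ 2 := by positivity
  set g : ℝ → ℝ := gpdf 0 (σt ^ 2) with hg
  set G : ℝ → ℝ := cdfOf g with hG
  -- facts about p
  have hpc : Continuous p := by
    rw [hp]; exact ((continuous_gpdf _ _).div_const 2).add ((continuous_gpdf _ _).div_const 2)
  have hpi : Integrable p := by
    rw [hp]
    exact (((integrable_gpdf _ hv.le).div_const 2).add ((integrable_gpdf _ hv.le).div_const 2))
  have hppos : ∀ x, 0 < p x := by
    intro x; rw [hp]
    have h1 := gpdf_pos (-a) hv x
    have h2 := gpdf_pos a hv x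
    dsimp only; positivity
  have hptot : ∫ x, p x = 1 := by
    rw [hp, integral_add ((integrable_gpdf _ hv.le).div_const 2)
      ((integrable_gpdf _ hv.le).div_const 2), integral_div, integral_div,
      integral_gpdf _ hv, integral_gpdf _ hv]
    norm_num
  have hpeven : ∀ x, p (-x) = p x := by
    intro x; rw [hp]; dsimp only
    rw [gpdf_neg a (σ^2) x]
    rw [show gpdf a (σ^2) (-x) = gpdf (-a) (σ^2) x by
      conv_lhs => rw [show a = -(-a) by ring]
      exact gpdf_neg (-a) (σ^2) x]
    ring
  have hF0 : cdfOf p 0 = 1 / 2 := cdfOf_zero_of_even hpi hpeven hptot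
  -- facts about g and G
  have hgc : Continuous g := continuous_gpdf _ _
  have hgi : Integrable g := integrable_gpdf _ hvt.le
  have hgpos : ∀ x, 0 < g x := fun x => gpdf_pos 0 hvt x
  have hgtot : ∫ x, g x = 1 := integral_gpdf _ hvt
  have hgeven : ∀ x, g (-x) = g x := by
    intro x; rw [hg]
    have := gpdf_neg 0 (σt^2) x
    rwa [neg_zero] at this
  have hG0 : G 0 = 1 / 2 := cdfOf_zero_of_even hgi hgeven hgtot
  have hGm : StrictMono G := strictMono_cdfOf hgi hgc hgpos
  have hGc : Continuous G := continuous_iff_continuousAt.2 fun x =>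
    (hasDerivAt_cdfOf hgi hgc x).continuousAt
  obtain ⟨hcont, hev⟩ := invFun_props hGc hGm 0
  have hEq : G 0 = cdfOf p 0 := by rw [hG0, hF0]
  have hinv0 : invFun G (cdfOf p 0) = 0 := by
    rw [← hEq]; exact Function.leftInverse_invFun hGm.injective 0
  -- derivative of invFun G at cdfOf p 0
  have hG' : HasDerivAt G (g 0) 0 := hasDerivAt_cdfOf hgi hgc 0
  have hinv : HasDerivAt (invFun G) (g 0)⁻¹ (cdfOf p 0) := by
    refine HasDerivAt.of_local_left_inverse (f := G) ?_ ?_ (hgpos 0).ne' ?_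
    · rw [← hEq]; exact hcont
    · rw [hinv0]; exact hG'
    · rw [← hEq]; exact hev
  have hF : HasDerivAt (cdfOf p) (p 0) 0 := hasDerivAt_cdfOf hpi hpc 0
  have hcomp : HasDerivAt (invFun G ∘ cdfOf p) ((g 0)⁻¹ * p 0) 0 := HasDerivAt.comp 0 hinv hF
  -- compute the value
  have hs : Real.sqrt (2*Real.pi*σ^2) = Real.sqrt (2*Real.pi) * σ := by
    rw [Real.sqrt_mul (by positivity), Real.sqrt_sq hσ.le]
  have hst : Real.sqrt (2*Real.pi*σt^2) = Real.sqrt (2*Real.pi) * σt := by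
    rw [Real.sqrt_mul (by positivity), Real.sqrt_sq hσt.le]
  have hp0 : p 0 = (Real.sqrt (2*Real.pi) * σ)⁻¹ * Real.exp (-(a^2)/(2*σ^2)) := by
    rw [hp]; unfold gpdf; rw [hs]; ring_nf
  have hg0 : g 0 = (Real.sqrt (2*Real.pi) * σt)⁻¹ := by
    rw [hg]; unfold gpdf; rw [hst]; norm_num
  have hπ : 0 < Real.sqrt (2*Real.pi) := Real.sqrt_pos.2 (by positivity)
  have hval : (g 0)⁻¹ * p 0 = σt / σ * Real.exp (-(a ^ 2) / (2 * σ ^ 2)) := by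
    rw [hp0, hg0, inv_inv]; field_simp
  rw [hT, ← hval]
  exact hcomp
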